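/- arXiv:2508.02900 — 4 statements merged into one kernel-verified Lean document; each statement's English description precedes it below -/
import Mathlib

section
/- Let s be a multiset of real numbers with card s = n, and let m be a natural number with 1 ≤ m ≤ n − 1. Then the set of multisets reachable from s by exactly m Countdown steps has cardinality at most ∏_{i = n+1−m}^{n} 3·i·(i−1). -/
/-- A single Countdown step: remove two elements `x, y` (occupying distinct
positions) from the multiset and insert `o(x,y)` for an arithmetic
operation `o ∈ {+, -, *, /}`, division only by a nonzero number. -/
def CountdownStep (s t : Multiset ℝ) : Prop :=
  ∃ (u : Multiset ℝ) (x y r : ℝ), s = x ::ₘ y ::ₘ u ∧ t = r ::ₘ u ∧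
    (r = x + y ∨ r = x - y ∨ r = x * y ∨ (y ≠ 0 ∧ r = x / y))

/-- `CountdownStepN m s t` holds iff `t` is reachable from `s` by exactly `m`
Countdown steps. -/
def CountdownStepN : ℕ → Multiset ℝ → Multiset ℝ → Prop
  | 0 => fun s t => t = s
  | m + 1 => fun s t => ∃ u, CountdownStep s u ∧ CountdownStepN m u t

/-!
A Countdown step is determined by the unordered pair of positions it combines, `C(i, 2)`
choices in a multiset of size `i`, together with one of the six values
`x + y, x * y, x - y, y - x, x / y, y / x`. So at most `6 * C(i, 2) = 3 i (i - 1)` multisets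
are one step away from a multiset of size `i`, all of size `i - 1`, and the number reachable in
`m` steps is bounded by the product of these factors for `i = n, n - 1, …, n + 1 - m`.
-/

open Finset

theorem Multiset.pair_eq_pair_iff {α : Type*} {a b c d : α} :
    ({a, b} : Multiset α) = {c, d} ↔ a = c ∧ b = d ∨ a = d ∧ b = c := by
  simp only [Multiset.insert_eq_cons, Multiset.cons_eq_cons, Multiset.singleton_inj,
    Multiset.singleton_eq_cons_iff, exists_eq_right_right, and_true]
  constructor
  · rintro (h | ⟨-, rfl, rfl⟩)
    exacts [.inl h, .inr ⟨rfl, rfl⟩]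
  · rintro (h | ⟨rfl, rfl⟩)
    · exact .inl h
    · by_cases hab : a = b
      · exact .inl ⟨hab, hab.symm⟩
      · exact .inr ⟨hab, rfl, rfl⟩

namespace Countdown

noncomputable def opResults (x y : ℝ) : Finset ℝ := {x + y, x * y, x - y, y - x, x / y, y / x}

lemma opResults_comm (x y : ℝ) : opResults x y = opResults y x := by
  ext r
  simp only [opResults, mem_insert, mem_singleton, add_comm x, mul_comm x]
  tauto

lemma card_opResults_le (x y : ℝ) : (opResults x y).card ≤ 6 := card_le_six

lemma mem_opResults {x y r : ℝ}
    (h : r = x + y ∨ r = x - y ∨ r = x * y ∨ (y ≠ 0 ∧ r = x / y)) :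
    r ∈ opResults x y := by
  simp only [opResults, mem_insert, mem_singleton]
  tauto

open Classical in
noncomputable def pairResults (p : Multiset ℝ) : Finset ℝ :=
  if h : ∃ x y, p = {x, y} then opResults h.choose h.choose_spec.choose else ∅

lemma pairResults_pair (x y : ℝ) : pairResults {x, y} = opResults x y := by
  have h : ∃ a b, ({x, y} : Multiset ℝ) = {a, b} := ⟨x, y, rfl⟩
  rw [pairResults, dif_pos h]
  rcases Multiset.pair_eq_pair_iff.mp h.choose_spec.choose_spec with
    ⟨hx, hy⟩ | ⟨hx, hy⟩
  · exact (congrArg₂ opResults hx hy).symm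
  · exact (congrArg₂ opResults hy hx).symm.trans (opResults_comm y x)

lemma card_pairResults_le (p : Multiset ℝ) : (pairResults p).card ≤ 6 := by
  rw [pairResults]
  split_ifs
  · exact card_opResults_le _ _
  · simp

open Classical in
noncomputable def stepCover (s : Multiset ℝ) : Finset (Multiset ℝ) :=
  (Multiset.powersetCard 2 s).toFinset.biUnion fun p => (pairResults p).image (· ::ₘ (s - p))

lemma mem_stepCover {s t : Multiset ℝ} (h : CountdownStep s t) : t ∈ stepCover s := by
  classical
  obtain ⟨u, x, y, r, rfl, rfl, hr⟩ := h
  have hxy : ({x, y} : Multiset ℝ) + u = x ::ₘ y ::ₘ u := by simp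
  simp only [stepCover, mem_biUnion, Multiset.mem_toFinset, Multiset.mem_powersetCard, mem_image]
  refine ⟨{x, y}, ⟨?_, by simp⟩, r, ?_, ?_⟩
  · exact hxy ▸ Multiset.le_add_right _ _
  · exact pairResults_pair x y ▸ mem_opResults hr
  · rw [← hxy, add_tsub_cancel_left]

lemma card_of_mem_stepCover {s t : Multiset ℝ} (h : t ∈ stepCover s) :
    Multiset.card t = Multiset.card s - 1 := by
  classical
  simp only [stepCover, mem_biUnion, Multiset.mem_toFinset, Multiset.mem_powersetCard,
    mem_image] at h
  obtain ⟨p, ⟨hps, hp⟩, r, -, rfl⟩ := h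
  have := Multiset.card_le_card hps
  rw [Multiset.card_cons, Multiset.card_sub hps]
  omega

lemma card_stepCover_le (s : Multiset ℝ) :
    (stepCover s).card ≤ 3 * Multiset.card s * (Multiset.card s - 1) := by
  classical
  set n := Multiset.card s
  obtain ⟨k, hk⟩ := (Nat.even_mul_pred_self n).two_dvd
  calc (stepCover s).card
      ≤ ∑ p ∈ (Multiset.powersetCard 2 s).toFinset,
          ((pairResults p).image (· ::ₘ (s - p))).card := card_biUnion_le
    _ ≤ ∑ _p ∈ (Multiset.powersetCard 2 s).toFinset, 6 :=
        sum_le_sum fun p _ => card_image_le.trans (card_pairResults_le p)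
    _ = (Multiset.powersetCard 2 s).toFinset.card * 6 := sum_const_nat fun _ _ => rfl
    _ ≤ n.choose 2 * 6 := by
        gcongr
        exact (Multiset.toFinset_card_le _).trans (Multiset.card_powersetCard 2 s).le
    _ = 3 * n * (n - 1) := by rw [Nat.choose_two_right, mul_assoc, hk]; omega

noncomputable def reachCover : ℕ → Multiset ℝ → Finset (Multiset ℝ)
  | 0, s => {s}
  | m + 1, s => (stepCover s).biUnion (reachCover m)

lemma mem_reachCover {m : ℕ} {s t : Multiset ℝ} (h : CountdownStepN m s t) :
    t ∈ reachCover m s := by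
  induction m generalizing s with
  | zero => exact mem_singleton.mpr h
  | succ m ih =>
    obtain ⟨u, hsu, hut⟩ := h
    exact mem_biUnion.mpr ⟨u, mem_stepCover hsu, ih hut⟩

def reachBound (n m : ℕ) : ℕ := ∏ i ∈ Icc (n + 1 - m) n, 3 * i * (i - 1)

lemma reachBound_succ (n m : ℕ) :
    reachBound n (m + 1) = 3 * n * (n - 1) * reachBound (n - 1) m := by
  cases n with
  | zero => simp [reachBound]
  | succ n =>
    rw [reachBound, reachBound, Nat.add_sub_add_right, prod_Icc_succ_top (by omega), mul_comm]
    simp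

lemma card_reachCover_le (m : ℕ) (s : Multiset ℝ) :
    (reachCover m s).card ≤ reachBound (Multiset.card s) m := by
  induction m generalizing s with
  | zero => simp [reachCover, reachBound]
  | succ m ih =>
    calc (reachCover (m + 1) s).card
        ≤ ∑ u ∈ stepCover s, (reachCover m u).card := card_biUnion_le
      _ ≤ ∑ _u ∈ stepCover s, reachBound (Multiset.card s - 1) m :=
          sum_le_sum fun u hu => card_of_mem_stepCover hu ▸ ih u
      _ = (stepCover s).card * reachBound (Multiset.card s - 1) m := sum_const_nat fun _ _ => rfl
      _ ≤ 3 * Multiset.card s * (Multiset.card s - 1) * reachBound (Multiset.card s - 1) m := by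
          gcongr
          exact card_stepCover_le s
      _ = reachBound (Multiset.card s) (m + 1) := (reachBound_succ _ _).symm

end Countdown

open Countdown in
theorem countdown_stepN_ncard_le_general (s : Multiset ℝ) (n m : ℕ)
    (hs : Multiset.card s = n) :
    {t : Multiset ℝ | CountdownStepN m s t}.ncard ≤
      ∏ i ∈ Finset.Icc (n + 1 - m) n, 3 * i * (i - 1) := by
  have hsub : {t | CountdownStepN m s t} ⊆ reachCover m s := fun _ => mem_reachCover
  calc {t | CountdownStepN m s t}.ncard
      ≤ (reachCover m s : Set (Multiset ℝ)).ncard := Set.ncard_le_ncard hsub (finite_toSet _)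
    _ = (reachCover m s).card := Set.ncard_coe_finset _
    _ ≤ reachBound n m := hs ▸ card_reachCover_le m s

theorem countdown_stepN_ncard_le (s : Multiset ℝ) (n m : ℕ)
    (hs : Multiset.card s = n) (hm1 : 1 ≤ m) (hm2 : m ≤ n - 1) :
    {t : Multiset ℝ | CountdownStepN m s t}.ncard ≤
      ∏ i ∈ Finset.Icc (n + 1 - m) n, 3 * i * (i - 1) :=
  countdown_stepN_ncard_le_general s n m hs
end

section
/- Let s be a multiset of real numbers with card s = n, where n ≥ 1. Then the set of all multisets reachable from s by any finite sequence of Countdown steps (including the empty sequence, so s itself is counted) has cardinality at most ∑_{j=1}^{n} 3^{j−1} · n! · (n−1)! / ((n−j)! · (n+1−j)!). -/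
/-- `CountdownReach s t` holds iff `t` is obtainable from `s` by a finite
(possibly empty) sequence of Countdown steps. -/
def CountdownReach : Multiset ℝ → Multiset ℝ → Prop :=
  Relation.ReflTransGen CountdownStep

namespace Nat

theorem cast_descFactorial_eq_div {K : Type*} [Field K] [CharZero K] {n k : ℕ} (h : k ≤ n) :
    (n.descFactorial k : K) = n ! / (n - k)! := by
  rw [descFactorial_eq_div h,
    cast_div (factorial_dvd_factorial (sub_le n k)) (cast_ne_zero.2 (factorial_ne_zero _))]

end Nat

namespace Multiset

variable {α β : Type*}

theorem card_bind_of_card_eq {s : Multiset α} {f : α → Multiset β} {c : ℕ}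
    (h : ∀ a ∈ s, card (f a) = c) : card (s.bind f) = card s * c := by
  rw [card_bind, map_congr (f := card ∘ f) (g := fun _ => c) rfl h, map_const', sum_replicate,
    smul_eq_mul]

def offDiag (s : Multiset α) : Multiset (α × α) :=
  Quot.liftOn s (fun l => (l.offDiag : Multiset (α × α))) fun _ _ h => Quot.sound h.offDiag

theorem card_offDiag (s : Multiset α) : card s.offDiag = card s * (card s - 1) :=
  Quot.inductionOn s List.length_offDiag'

theorem offDiag_pair (x y : α) : offDiag {x, y} = {(x, y), (y, x)} := rfl

end Multiset

open Multiset

/-- Quotients by `0` contribute the junk value `0`, so this may overcount the outcomes. -/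
noncomputable def pairResults (p : Multiset ℝ) : Multiset ℝ :=
  p.sum ::ₘ p.prod ::ₘ p.offDiag.bind fun q => {q.1 - q.2, q.1 / q.2}

noncomputable def countdownMoves (s : Multiset ℝ) : Multiset (Multiset ℝ) :=
  (s.powersetCard 2).bind fun p => (pairResults p).map (· ::ₘ (s - p))

theorem card_pairResults {p : Multiset ℝ} (hp : card p = 2) : card (pairResults p) = 6 := by
  rw [pairResults, card_cons, card_cons, card_bind_of_card_eq fun _ _ => card_pair _ _,
    card_offDiag, hp]

theorem card_countdownMoves (s : Multiset ℝ) :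
    card (countdownMoves s) = 3 * card s * (card s - 1) := by
  rw [countdownMoves, card_bind_of_card_eq fun p hp => by
    rw [card_map, card_pairResults (mem_powersetCard.1 hp).2], card_powersetCard,
    Nat.choose_two_right, mul_assoc 3]
  obtain ⟨k, hk⟩ := Nat.even_mul_pred_self (card s)
  omega

theorem card_of_mem_countdownMoves {s t : Multiset ℝ} (h : t ∈ countdownMoves s) :
    card t = card s - 1 := by
  obtain ⟨p, hp, r, -, rfl⟩ :
      ∃ p ∈ s.powersetCard 2, ∃ r ∈ pairResults p, r ::ₘ (s - p) = t := by
    simpa [countdownMoves] using h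
  rw [mem_powersetCard] at hp
  have := card_le_card hp.1
  rw [card_cons, card_sub hp.1, hp.2]
  omega

theorem mem_countdownMoves_of_step {s t : Multiset ℝ} (h : CountdownStep s t) :
    t ∈ countdownMoves s := by
  obtain ⟨u, x, y, r, rfl, rfl, hr⟩ := h
  have hs : x ::ₘ y ::ₘ u = {x, y} + u := by simp
  refine mem_bind.2 ⟨{x, y}, mem_powersetCard.2 ⟨hs ▸ le_add_right _ _, card_pair x y⟩,
    mem_map.2 ⟨r, ?_, by rw [hs, add_tsub_cancel_left]⟩⟩
  rcases hr with rfl | rfl | rfl | ⟨-, rfl⟩ <;>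
    simp only [pairResults, offDiag_pair] <;> simp

noncomputable def countdownLevel (s : Multiset ℝ) : ℕ → Multiset (Multiset ℝ)
  | 0 => {s}
  | k + 1 => (countdownLevel s k).bind countdownMoves

theorem exists_mem_countdownLevel {s t : Multiset ℝ} (h : CountdownReach s t) :
    ∃ k, t ∈ countdownLevel s k := by
  induction h with
  | refl => exact ⟨0, mem_singleton_self s⟩
  | tail _ hstep ih =>
    obtain ⟨k, hk⟩ := ih
    exact ⟨k + 1, mem_bind.2 ⟨_, hk, mem_countdownMoves_of_step hstep⟩⟩

theorem card_of_mem_countdownLevel {s t : Multiset ℝ} {k : ℕ} (h : t ∈ countdownLevel s k) :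
    card t = card s - k := by
  induction k generalizing t with
  | zero => rw [mem_singleton.1 h]; rfl
  | succ k ih =>
    obtain ⟨t', ht', ht⟩ := mem_bind.1 h
    rw [card_of_mem_countdownMoves ht, ih ht', Nat.sub_sub]

theorem card_countdownLevel (s : Multiset ℝ) (k : ℕ) :
    card (countdownLevel s k) =
      3 ^ k * (card s).descFactorial k * (card s - 1).descFactorial k := by
  induction k with
  | zero => simp [countdownLevel]
  | succ k ih =>
    rw [countdownLevel, card_bind_of_card_eq fun t ht => by
      rw [card_countdownMoves, card_of_mem_countdownLevel ht], ih,
      Nat.descFactorial_succ, Nat.descFactorial_succ, Nat.sub_sub, Nat.add_comm k 1,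
      ← Nat.sub_sub]
    ring

theorem countdownLevel_eq_zero {s : Multiset ℝ} {k : ℕ} (hk : card s - 1 < k) :
    countdownLevel s k = 0 := by
  rw [← card_eq_zero, card_countdownLevel, Nat.descFactorial_eq_zero_iff_lt.2 hk, mul_zero]

theorem lt_card_of_mem_countdownLevel {s t : Multiset ℝ} {k : ℕ} (hs : s ≠ 0)
    (h : t ∈ countdownLevel s k) : k < card s := by
  by_contra! hk
  rw [countdownLevel_eq_zero (by have := card_pos.2 hs; omega)] at h
  exact notMem_zero t h

theorem ncard_countdownReach_le {s : Multiset ℝ} (hs : s ≠ 0) :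
    {t | CountdownReach s t}.ncard ≤ ∑ k ∈ Finset.range (card s),
      3 ^ k * (card s).descFactorial k * (card s - 1).descFactorial k := by
  classical
  set L := ∑ k ∈ Finset.range (card s), countdownLevel s k
  have hsub : {t | CountdownReach s t} ⊆ L.toFinset := fun t ht => by
    obtain ⟨k, hk⟩ := exists_mem_countdownLevel ht
    exact mem_toFinset.2
      (mem_sum.2 ⟨k, Finset.mem_range.2 (lt_card_of_mem_countdownLevel hs hk), hk⟩)
  calc {t | CountdownReach s t}.ncard
      ≤ L.toFinset.card := (Set.ncard_le_ncard hsub).trans_eq (Set.ncard_coe_finset _)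
    _ ≤ card L := toFinset_card_le L
    _ = _ := by simp only [L, card_sum, card_countdownLevel]

open Nat in
theorem countdown_reachable_ncard_le (s : Multiset ℝ) (n : ℕ)
    (hs : Multiset.card s = n) (hn : 1 ≤ n) :
    ({t : Multiset ℝ | CountdownReach s t}.ncard : ℚ) ≤
      ∑ j ∈ Finset.Icc 1 n,
        (3 : ℚ) ^ (j - 1) * (n ! : ℚ) * ((n - 1)! : ℚ) /
          (((n - j)! : ℚ) * ((n + 1 - j)! : ℚ)) := by
  subst hs
  calc ({t | CountdownReach s t}.ncard : ℚ)
      ≤ ∑ k ∈ Finset.range (card s),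
          ((3 ^ k * (card s).descFactorial k * (card s - 1).descFactorial k : ℕ) : ℚ) := by
        exact_mod_cast ncard_countdownReach_le (card_pos.1 hn)
    _ = _ := by
      rw [← Finset.Ico_add_one_right_eq_Icc, Finset.sum_Ico_eq_sum_range, Nat.add_sub_cancel]
      refine Finset.sum_congr rfl fun k hk => ?_
      have hk := Finset.mem_range.1 hk
      rw [show 1 + k - 1 = k by omega, show card s - (1 + k) = card s - 1 - k by omega,
        show card s + 1 - (1 + k) = card s - k by omega]
      push_cast
      rw [Nat.cast_descFactorial_eq_div hk.le, Nat.cast_descFactorial_eq_div (by omega)]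
      ring
end

section
/- Let n ≥ 1, let x : Fin n → ℤ, let ω be an integer, and let s be the multiset {exp(x(0)), …, exp(x(n−1))} of real numbers. If the singleton multiset {exp(ω)} is reachable from s by a finite sequence of multiplicative Countdown steps (steps using only × and ÷), then there exists a sign assignment ε : Fin n → ℤ with ε(i) ∈ {1, −1} for every i such that ∑_{i} ε(i) · x(i) = ω. -/
/-- A multiplicative Countdown step: remove two elements `x, y` (occupying
distinct positions) from the multiset and insert `x * y` or `x / y`,
division only by a nonzero number. -/
def MulCountdownStep (s t : Multiset ℝ) : Prop :=
  ∃ (u : Multiset ℝ) (x y r : ℝ), s = x ::ₘ y ::ₘ u ∧ t = r ::ₘ u ∧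
    (r = x * y ∨ (y ≠ 0 ∧ r = x / y))

/-- Reachability by a finite (possibly empty) sequence of multiplicative
Countdown steps. -/
def MulCountdownReach : Multiset ℝ → Multiset ℝ → Prop :=
  Relation.ReflTransGen MulCountdownStep

/-!
Every number on the board is `exp (v ⬝ᵥ x)` for an integer coefficient vector `v`,
and the coefficient vectors of the board form a signed partition of the indices: for
each index `i`, exactly one vector has a nonzero `i`-th entry, and that entry is `±1`.
Initially the vectors are the unit vectors. Multiplying or dividing two numbers replaces
their vectors `v, w` by `v ± w`; since `v` and `w` have disjoint supports, the partition
property survives. At the end a single vector remains, all of whose entries are `±1`.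
-/

open Matrix

theorem Multiset.exists_eq_cons_of_map_eq_cons {α β : Type*} {f : α → β} {s : Multiset α}
    {b : β} {t : Multiset β} (h : s.map f = b ::ₘ t) :
    ∃ a u, s = a ::ₘ u ∧ f a = b ∧ u.map f = t := by
  obtain ⟨a, ha, rfl⟩ := Multiset.mem_map.mp (h ▸ Multiset.mem_cons_self b t)
  obtain ⟨u, rfl⟩ := Multiset.exists_cons_of_mem ha
  rw [Multiset.map_cons, Multiset.cons_inj_right] at h
  exact ⟨a, u, rfl, rfl, h⟩

theorem Int.mul_eq_zero_of_sq_add_sq_le_one {a b : ℤ} (h : a ^ 2 + b ^ 2 ≤ 1) : a * b = 0 := by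
  nlinarith [sq_nonneg (a - b), sq_nonneg (a + b)]

/-- Each index is covered by exactly one vector of `L`, with coefficient `±1`. -/
def IsSignedPartition {ι : Type*} (L : Multiset (ι → ℤ)) : Prop :=
  ∀ i, (L.map fun v => v i ^ 2).sum = 1

namespace IsSignedPartition

variable {ι : Type*}

theorem mul_eq_zero {v w : ι → ℤ} {L : Multiset (ι → ℤ)}
    (hL : IsSignedPartition (v ::ₘ w ::ₘ L)) (i : ι) : v i * w i = 0 := by
  have hrest : 0 ≤ (L.map fun u => u i ^ 2).sum :=
    Multiset.sum_nonneg fun _ hz => by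
      obtain ⟨u, -, rfl⟩ := Multiset.mem_map.mp hz
      positivity
  have hi := hL i
  simp only [Multiset.map_cons, Multiset.sum_cons] at hi
  exact Int.mul_eq_zero_of_sq_add_sq_le_one (by linarith)

theorem merge {v w u : ι → ℤ} {L : Multiset (ι → ℤ)}
    (hL : IsSignedPartition (v ::ₘ w ::ₘ L)) (hu : ∀ i, u i ^ 2 = v i ^ 2 + w i ^ 2) :
    IsSignedPartition (u ::ₘ L) := fun i => by
  have hi := hL i
  simp only [Multiset.map_cons, Multiset.sum_cons] at hi ⊢
  rw [hu i, add_assoc, hi]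

theorem merge_add {v w : ι → ℤ} {L : Multiset (ι → ℤ)}
    (hL : IsSignedPartition (v ::ₘ w ::ₘ L)) : IsSignedPartition ((v + w) ::ₘ L) :=
  hL.merge fun i => by
    simp only [Pi.add_apply]
    linear_combination 2 * hL.mul_eq_zero i

theorem merge_sub {v w : ι → ℤ} {L : Multiset (ι → ℤ)}
    (hL : IsSignedPartition (v ::ₘ w ::ₘ L)) : IsSignedPartition ((v - w) ::ₘ L) :=
  hL.merge fun i => by
    simp only [Pi.sub_apply]
    linear_combination -2 * hL.mul_eq_zero i

theorem univ_single [Fintype ι] [DecidableEq ι] :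
    IsSignedPartition (Finset.univ.val.map fun j : ι => Pi.single j 1) := fun i => by
  simp only [Multiset.map_map, Function.comp_def]
  change ∑ j, (Pi.single j 1 : ι → ℤ) i ^ 2 = 1
  simp [Pi.single_apply]

theorem eq_one_or_eq_neg_one {v : ι → ℤ} (hv : IsSignedPartition {v}) (i : ι) :
    v i = 1 ∨ v i = -1 := by
  simpa using hv i

end IsSignedPartition

section Board

variable {ι : Type*} [Fintype ι] (x : ι → ℤ)

def IsSignedPartitionBoard (s : Multiset ℝ) : Prop :=
  ∃ L : Multiset (ι → ℤ), IsSignedPartition L ∧ s = L.map fun v => Real.exp ↑(v ⬝ᵥ x)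

variable {x}

theorem IsSignedPartitionBoard.of_step {s t : Multiset ℝ} (hs : IsSignedPartitionBoard x s)
    (hst : MulCountdownStep s t) : IsSignedPartitionBoard x t := by
  obtain ⟨L, hL, rfl⟩ := hs
  obtain ⟨u, a, b, r, hab, rfl, hr⟩ := hst
  obtain ⟨v, L', rfl, rfl, hL'⟩ := Multiset.exists_eq_cons_of_map_eq_cons hab
  obtain ⟨w, L₀, rfl, rfl, rfl⟩ := Multiset.exists_eq_cons_of_map_eq_cons hL'
  rcases hr with rfl | ⟨-, rfl⟩
  · refine ⟨(v + w) ::ₘ L₀, hL.merge_add, ?_⟩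
    simp [add_dotProduct, Real.exp_add]
  · refine ⟨(v - w) ::ₘ L₀, hL.merge_sub, ?_⟩
    simp [sub_dotProduct, Real.exp_sub]

theorem IsSignedPartitionBoard.of_reach {s t : Multiset ℝ} (hs : IsSignedPartitionBoard x s)
    (hst : MulCountdownReach s t) : IsSignedPartitionBoard x t := by
  induction hst with
  | refl => exact hs
  | tail _ hstep ih => exact ih.of_step hstep

variable (x)

theorem isSignedPartitionBoard_initial [DecidableEq ι] :
    IsSignedPartitionBoard x (Finset.univ.val.map fun i => Real.exp (x i)) :=
  ⟨_, IsSignedPartition.univ_single, by simp [Multiset.map_map]⟩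

end Board

theorem mul_countdown_reach_target_signs_general (n : ℕ)
    (x : Fin n → ℤ) (ω : ℤ)
    (h : MulCountdownReach
      (Multiset.map (fun i => Real.exp ((x i : ℤ) : ℝ)) Finset.univ.val)
      {Real.exp ((ω : ℤ) : ℝ)}) :
    ∃ ε : Fin n → ℤ, (∀ i, ε i = 1 ∨ ε i = -1) ∧ ∑ i, ε i * x i = ω := by
  obtain ⟨L, hL, hfinal⟩ := (isSignedPartitionBoard_initial x).of_reach h
  obtain ⟨ε, rfl, hε⟩ := Multiset.map_eq_singleton.mp hfinal.symm
  exact ⟨ε, hL.eq_one_or_eq_neg_one, by exact_mod_cast Real.exp_injective hε⟩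

theorem mul_countdown_reach_target_signs (n : ℕ) (hn : 1 ≤ n)
    (x : Fin n → ℤ) (ω : ℤ)
    (h : MulCountdownReach
      (Multiset.map (fun i => Real.exp ((x i : ℤ) : ℝ)) Finset.univ.val)
      {Real.exp ((ω : ℤ) : ℝ)}) :
    ∃ ε : Fin n → ℤ, (∀ i, ε i = 1 ∨ ε i = -1) ∧ ∑ i, ε i * x i = ω :=
  mul_countdown_reach_target_signs_general n x ω h
end

section
/- Let s be a multiset of real numbers containing only numbers of the form exp(k) with k an integer. If a single additive Countdown step is applied to s, i.e., two elements u, v are removed from s and u + v (or u − v) is inserted, then the inserted number u + v (respectively u − v) is not of the form exp(k) for any integer k. (For u − v, this holds in the nontrivial case; when u − v ≤ 0 it is immediate since exp is positive.) -/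
lemma exp_add_exp_ne (m n k : ℤ) :
    Real.exp (m : ℝ) + Real.exp (n : ℝ) ≠ Real.exp (k : ℝ) := by
  wlog hmn : m ≤ n generalizing m n
  · intro h; exact this n m (le_of_not_ge hmn) (by linarith)
  intro h
  have hk : (n : ℝ) < k := by
    rw [← Real.exp_lt_exp, ← h]
    have := Real.exp_pos (m : ℝ); linarith
  have hk' : (n : ℤ) + 1 ≤ k := by exact_mod_cast hk
  have h1 : Real.exp ((n : ℝ) + 1) ≤ Real.exp (k : ℝ) := by
    apply Real.exp_le_exp.2; exact_mod_cast hk'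
  rw [Real.exp_add] at h1
  have h2 : Real.exp (m : ℝ) ≤ Real.exp (n : ℝ) :=
    Real.exp_le_exp.2 (by exact_mod_cast hmn)
  have h3 : (2 : ℝ) < Real.exp 1 := by
    have := Real.add_one_lt_exp (x := 1) one_ne_zero; linarith
  have hn := Real.exp_pos (n : ℝ)
  nlinarith

theorem additive_step_not_exp_int (s : Multiset ℝ)
    (hs : ∀ a ∈ s, ∃ k : ℤ, a = Real.exp ((k : ℤ) : ℝ))
    (u v : ℝ) (w : Multiset ℝ) (huv : s = u ::ₘ v ::ₘ w) :
    (¬ ∃ k : ℤ, u + v = Real.exp ((k : ℤ) : ℝ)) ∧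
    (¬ ∃ k : ℤ, u - v = Real.exp ((k : ℤ) : ℝ)) := by
  obtain ⟨m, hm⟩ := hs u (by simp [huv])
  obtain ⟨n, hn⟩ := hs v (by simp [huv])
  subst hm hn
  constructor
  · rintro ⟨k, hk⟩; exact exp_add_exp_ne m n k hk
  · rintro ⟨k, hk⟩
    exact exp_add_exp_ne k n m (by linarith)
end
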